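/- arXiv:2412.18515 — 2 statements merged into one kernel-verified Lean document; each statement's English description precedes it below -/
import Mathlib

section
/- The empirical ball-count density estimator is consistent at continuity points: let ν be a probability measure on a metric space, x a point such that the function ε ↦ ν(B(x,ε))/w(ε) converges to ρ(x) as ε → 0 for a normalizing function w(ε) = V_d ε^d, and let ρ̂_{N,ε}(x) = #{i ≤ N : Xᵢ ∈ B(x,ε)}/(N·w(ε)) for iid samples Xᵢ ∼ ν. If ε_N → 0 and N·ε_N^{2d} → ∞, then ρ̂_{N,ε_N}(x) → ρ(x) in probability. -/
open MeasureTheory ProbabilityTheory Filter Topology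
open scoped Classical

/-- Consistency of the empirical ball-count density estimator at a point of
continuity of the density: if `ν(B(x,ε))/(V_d ε^d) → ρ(x)` as `ε → 0⁺`,
`ε_N → 0` and `N · ε_N^{2d} → ∞`, then the estimator
`ρ̂_N(ω) = #{i < N : Xᵢ(ω) ∈ B(x, ε_N)}/(N · V_d · ε_N^d)` converges
to `ρ(x)` in probability. -/
theorem density_estimator_consistency
    {Ω : Type*} [MeasurableSpace Ω] (P : Measure Ω) [IsProbabilityMeasure P]
    {E : Type*} [MetricSpace E] [MeasurableSpace E] [BorelSpace E]
    (ν : Measure E) [IsProbabilityMeasure ν]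
    (X : ℕ → Ω → E) (hmeas : ∀ i, Measurable (X i))
    (hindep : iIndepFun X P)
    (hid : ∀ i, Measure.map (X i) P = ν)
    (x : E) (d : ℕ) (hd : 0 < d) (Vd : ℝ) (hVd : 0 < Vd) (ρx : ℝ)
    (hcont : Tendsto (fun ε : ℝ => (ν (Metric.ball x ε)).toReal / (Vd * ε ^ d))
      (nhdsWithin 0 (Set.Ioi 0)) (nhds ρx))
    (ε : ℕ → ℝ) (hεpos : ∀ N, 0 < ε N)
    (hε0 : Tendsto ε atTop (nhds 0))
    (hεN : Tendsto (fun N : ℕ => (N : ℝ) * ε N ^ (2 * d)) atTop atTop) :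
    ∀ t > (0 : ℝ),
      Tendsto (fun N : ℕ =>
        P {ω | t ≤ |(((Finset.range N).filter
              (fun i => X i ω ∈ Metric.ball x (ε N))).card : ℝ)
              / (N * (Vd * ε N ^ d)) - ρx|}) atTop (nhds 0) := by
  intro t ht
  -- notation
  set B : ℕ → Set E := fun N => Metric.ball x (ε N) with hB
  set w : ℕ → ℝ := fun N => Vd * ε N ^ d with hw
  have hwpos : ∀ N, 0 < w N := fun N => mul_pos hVd (pow_pos (hεpos N) d)
  set p : ℕ → ℝ := fun N => (ν (B N)).toReal with hp
  -- the indicator random variables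
  set Y : ℕ → ℕ → Ω → ℝ := fun N i ω => (B N).indicator (fun _ => (1:ℝ)) (X i ω) with hY
  have hYmeas : ∀ N i, Measurable (Y N i) :=
    fun N i => (measurable_const.indicator Metric.isOpen_ball.measurableSet).comp (hmeas i)
  have hYbd : ∀ N i ω, Y N i ω ∈ Set.Icc (0:ℝ) 1 := by
    intro N i ω
    by_cases h : X i ω ∈ B N <;> simp [hY, Set.indicator_apply, h]
  have hYmem : ∀ N i, MemLp (Y N i) 2 P := by
    intro N i
    refine memLp_top_of_bound (hYmeas N i).aestronglyMeasurable 1 ?_ |>.mono_exponent le_top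
    filter_upwards with ω
    have := hYbd N i ω
    rw [Real.norm_eq_abs, abs_le]
    constructor <;> linarith [this.1, this.2]
  -- expectation of each indicator
  have hYint : ∀ N i, P[Y N i] = p N := by
    intro N i
    have : P[Y N i] = ∫ y, (B N).indicator (fun _ => (1:ℝ)) y ∂(Measure.map (X i) P) := by
      rw [integral_map (hmeas i).aemeasurable]
      exact (measurable_const.indicator Metric.isOpen_ball.measurableSet).aestronglyMeasurable
    rw [this, hid i, integral_indicator_const (1:ℝ) Metric.isOpen_ball.measurableSet,
      smul_eq_mul, mul_one]
    rfl
  -- the sum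
  set S : ℕ → Ω → ℝ := fun N => ∑ i ∈ Finset.range N, Y N i with hS
  have hSmem : ∀ N, MemLp (S N) 2 P := fun N => memLp_finsetSum' _ (fun i _ => hYmem N i)
  have hSint : ∀ N, P[S N] = N * p N := by
    intro N
    have heq : P[S N] = ∫ ω, ∑ i ∈ Finset.range N, Y N i ω ∂P := by
      congr 1; ext ω; simp [hS]
    rw [heq, integral_finset_sum _ (fun i _ => (hYmem N i).integrable one_le_two)]
    simp [hYint]
  have hSvar : ∀ N, variance (S N) P ≤ N / 4 := by
    intro N
    rw [hS, IndepFun.variance_sum (fun i _ => hYmem N i)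
      (fun i hi j hj hij => (hindep.indepFun hij).comp
        (measurable_const.indicator Metric.isOpen_ball.measurableSet)
        (measurable_const.indicator Metric.isOpen_ball.measurableSet))]
    calc ∑ i ∈ Finset.range N, variance (Y N i) P
        ≤ ∑ i ∈ Finset.range N, ((1 - 0) / 2) ^ 2 := by
          refine Finset.sum_le_sum fun i _ => ?_
          exact variance_le_sq_of_bounded
            (Filter.Eventually.of_forall (hYbd N i)) (hYmeas N i).aemeasurable
      _ = N / 4 := by simp [Finset.sum_const]; ring
  -- card = S
  have hcard : ∀ N ω, (((Finset.range N).filter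
      (fun i => X i ω ∈ Metric.ball x (ε N))).card : ℝ) = S N ω := by
    intro N ω
    rw [hS, Finset.card_filter]
    push_cast
    rw [Finset.sum_apply]
    refine Finset.sum_congr rfl fun i _ => ?_
    by_cases h : dist (X i ω) x < ε N <;>
      simp [hY, Set.indicator_apply, Metric.mem_ball, hB, h]
  -- p N / w N → ρx
  have hratio : Tendsto (fun N => p N / w N) atTop (nhds ρx) := by
    refine hcont.comp ?_
    rw [tendsto_nhdsWithin_iff]
    exact ⟨hε0, Filter.Eventually.of_forall fun N => hεpos N⟩
  have hratio' : ∀ᶠ N in atTop, |p N / w N - ρx| < t / 2 := by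
    have h2 := (hratio.sub_const ρx).abs
    rw [sub_self, abs_zero] at h2
    exact h2.eventually (gt_mem_nhds (by linarith : (0:ℝ) < t / 2))
  -- the key eventual bound
  have hbound : ∀ᶠ N in atTop,
      P {ω | t ≤ |(((Finset.range N).filter
          (fun i => X i ω ∈ Metric.ball x (ε N))).card : ℝ)
          / (N * (Vd * ε N ^ d)) - ρx|}
      ≤ ENNReal.ofReal (1 / ((N : ℝ) * w N ^ 2 * t ^ 2)) := by
    filter_upwards [hratio', Filter.eventually_ge_atTop 1] with N hN hN1
    have hNpos : (0:ℝ) < N := by exact_mod_cast hN1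
    have hwp := hwpos N
    have hc : (0:ℝ) < N * w N * (t/2) := mul_pos (mul_pos hNpos hwp) (by linarith)
    calc P {ω | t ≤ |(((Finset.range N).filter
            (fun i => X i ω ∈ Metric.ball x (ε N))).card : ℝ)
            / (N * (Vd * ε N ^ d)) - ρx|}
        ≤ P {ω | N * w N * (t/2) ≤ |S N ω - P[S N]|} := by
          refine measure_mono fun ω hω => ?_
          simp only [Set.mem_setOf_eq] at hω ⊢
          rw [hcard N ω] at hω
          rw [hSint N]
          have h1 : |S N ω / (N * w N) - p N / w N| ≥ t / 2 := by
            have := abs_sub_abs_le_abs_sub (S N ω / (N * w N) - ρx) (p N / w N - ρx)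
            have htri : |S N ω / (N * w N) - ρx| ≤
                |S N ω / (N * w N) - p N / w N| + |p N / w N - ρx| := by
              calc |S N ω / (N * w N) - ρx|
                  = |(S N ω / (N * w N) - p N / w N) + (p N / w N - ρx)| := by
                    rw [sub_add_sub_cancel]
                _ ≤ _ := abs_add_le _ _
            linarith
          have hNw : (0:ℝ) < (N:ℝ) * w N := mul_pos hNpos hwp
          have h2 : S N ω / (N * w N) - p N / w N = (S N ω - N * p N) / (N * w N) := by
            field_simp
          rw [h2, abs_div, abs_of_pos hNw, ge_iff_le, le_div_iff₀ hNw] at h1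
          calc (N:ℝ) * w N * (t/2) = t/2 * ((N:ℝ) * w N) := by ring
            _ ≤ |S N ω - N * p N| := h1
      _ ≤ ENNReal.ofReal (variance (S N) P / ((N:ℝ) * w N * (t/2)) ^ 2) :=
          meas_ge_le_variance_div_sq (hSmem N) hc
      _ ≤ ENNReal.ofReal (1 / ((N : ℝ) * w N ^ 2 * t ^ 2)) := by
          refine ENNReal.ofReal_le_ofReal ?_
          have hD : (0:ℝ) < (N : ℝ) * w N ^ 2 * t ^ 2 :=
            mul_pos (mul_pos hNpos (pow_pos hwp 2)) (pow_pos ht 2)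
          rw [div_le_div_iff₀ (pow_pos hc 2) hD]
          calc variance (S N) P * ((N:ℝ) * w N ^ 2 * t ^ 2)
              ≤ ((N:ℝ) / 4) * ((N:ℝ) * w N ^ 2 * t ^ 2) :=
                mul_le_mul_of_nonneg_right (hSvar N) hD.le
            _ = 1 * ((N:ℝ) * w N * (t/2)) ^ 2 := by ring
  -- the bound tends to zero
  have hzero : Tendsto (fun N : ℕ => ENNReal.ofReal (1 / ((N : ℝ) * w N ^ 2 * t ^ 2)))
      atTop (nhds 0) := by
    have hdenom : Tendsto (fun N : ℕ => (N : ℝ) * w N ^ 2 * t ^ 2) atTop atTop := by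
      have heq : (fun N : ℕ => (N : ℝ) * w N ^ 2 * t ^ 2)
          = fun N : ℕ => (Vd ^ 2 * t ^ 2) * ((N : ℝ) * ε N ^ (2 * d)) := by
        funext N
        simp only [hw]
        rw [mul_comm 2 d, pow_mul]
        ring
      rw [heq]
      exact hεN.const_mul_atTop (by positivity)
    have hreal : Tendsto (fun N : ℕ => 1 / ((N : ℝ) * w N ^ 2 * t ^ 2)) atTop (nhds 0) := by
      simpa only [Function.comp_def, one_div] using tendsto_inv_atTop_zero.comp hdenom
    simpa using ENNReal.tendsto_ofReal hreal
  exact tendsto_of_tendsto_of_tendsto_of_le_of_le' tendsto_const_nhds hzero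
    (Filter.Eventually.of_forall fun N => zero_le) hbound
end

section
/- Let Φ₁,…,Φ_k be configurations of n points on the unit circle S¹ ⊂ ℝ². Let ((g₁,…,g_k),Θ) minimize the circular Procrustes loss L((h₁,…,h_k),Ξ) = (1/k)·Σᵢ Σⱼ d_{S¹}(hᵢ·Φᵢ(j), Ξ(j))² over hᵢ ∈ O(2) and Ξ : {1,…,n} → S¹, and let ((g₁',…,g_k'),Ψ) minimize the analogous Euclidean loss with d_{ℝ²} in place of d_{S¹} and Ξ : {1,…,n} → ℝ². Let Θ' be the radial projection of Ψ to S¹ (assuming no point of Ψ is the origin). Then inf_{h ∈ O(2)} d(h·Θ, Θ') ≤ (1+π)·√(L*), where L* = L((g₁,…,g_k),Θ) and d is the ℓ²-product of the circle metrics over the n points. -/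
open Real

noncomputable section

abbrev E2 := EuclideanSpace ℝ (Fin 2)

/-- Geodesic (arclength) distance on the unit circle in ℝ². -/
def dS1 (x y : E2) : ℝ := Real.arccos (inner ℝ x y : ℝ)

/-- Circular Procrustes loss. -/
def Lcirc (k n : ℕ) (Φ : Fin k → Fin n → E2)
    (h : Fin k → (E2 ≃ₗᵢ[ℝ] E2)) (Ξ : Fin n → E2) : ℝ :=
  (1 / (k : ℝ)) * ∑ i, ∑ j, dS1 (h i (Φ i j)) (Ξ j) ^ 2

/-- Euclidean Procrustes loss. -/
def Leuc (k n : ℕ) (Φ : Fin k → Fin n → E2)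
    (h : Fin k → (E2 ≃ₗᵢ[ℝ] E2)) (Ξ : Fin n → E2) : ℝ :=
  (1 / (k : ℝ)) * ∑ i, ∑ j, ‖h i (Φ i j) - Ξ j‖ ^ 2

lemma myArccos_anti {x y : ℝ} (h1 : -1 ≤ x) (h2 : x ≤ y) :
    Real.arccos y ≤ Real.arccos x := by
  unfold Real.arccos
  have := Real.monotone_arcsin h2
  linarith

lemma myInner_le_one {x y : E2} (hx : ‖x‖ = 1) (hy : ‖y‖ = 1) :
    |(inner ℝ x y : ℝ)| ≤ 1 := by
  have h := abs_real_inner_le_norm x y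
  rwa [hx, hy, mul_one] at h

lemma dS1_nonneg (x y : E2) : 0 ≤ dS1 x y := Real.arccos_nonneg _

lemma dS1_symm (x y : E2) : dS1 x y = dS1 y x := by
  unfold dS1; rw [real_inner_comm]

lemma dS1_isom (f : E2 ≃ₗᵢ[ℝ] E2) (x y : E2) : dS1 (f x) (f y) = dS1 x y := by
  unfold dS1; rw [LinearIsometryEquiv.inner_map_map]

lemma norm_sub_eq_two_sin {x y : E2} (hx : ‖x‖ = 1) (hy : ‖y‖ = 1) :
    ‖x - y‖ = 2 * Real.sin (dS1 x y / 2) := by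
  have ht := abs_le.1 (myInner_le_one hx hy)
  have h1 : ‖x - y‖ ^ 2 = 2 - 2 * (inner ℝ x y : ℝ) := by
    rw [norm_sub_sq_real, hx, hy]; ring
  have hcos : Real.cos (dS1 x y) = (inner ℝ x y : ℝ) :=
    Real.cos_arccos ht.1 ht.2
  have hle : dS1 x y ≤ π := Real.arccos_le_pi _
  have hhalf : Real.sin (dS1 x y / 2) ^ 2 = (1 - (inner ℝ x y : ℝ)) / 2 := by
    have hdb := Real.cos_two_mul (dS1 x y / 2)
    rw [show 2 * (dS1 x y / 2) = dS1 x y by ring, hcos] at hdb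
    have hs := Real.sin_sq_add_cos_sq (dS1 x y / 2)
    nlinarith
  have hpos : 0 ≤ Real.sin (dS1 x y / 2) := by
    apply Real.sin_nonneg_of_nonneg_of_le_pi
    · linarith [dS1_nonneg x y]
    · linarith [Real.pi_pos]
  have : ‖x - y‖ ^ 2 = (2 * Real.sin (dS1 x y / 2)) ^ 2 := by
    rw [h1]; nlinarith [hhalf]
  nlinarith [norm_nonneg (x - y), hpos]

lemma chord_le_arc {x y : E2} (hx : ‖x‖ = 1) (hy : ‖y‖ = 1) :
    ‖x - y‖ ≤ dS1 x y := by
  rw [norm_sub_eq_two_sin hx hy]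
  have := Real.sin_le (x := dS1 x y / 2) (by linarith [dS1_nonneg x y])
  linarith

lemma arc_le_chord {x y : E2} (hx : ‖x‖ = 1) (hy : ‖y‖ = 1) :
    dS1 x y ≤ π / 2 * ‖x - y‖ := by
  rw [norm_sub_eq_two_sin hx hy]
  have hle : dS1 x y ≤ π := Real.arccos_le_pi _
  have h1 : dS1 x y / 2 ≤ π / 2 := by linarith
  have h2 := Real.mul_le_sin (x := dS1 x y / 2) (by linarith [dS1_nonneg x y]) h1
  have hp := Real.pi_pos
  have h3 : dS1 x y ≤ π * Real.sin (dS1 x y / 2) :=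
    calc dS1 x y = π * (2 / π * (dS1 x y / 2)) := by field_simp
    _ ≤ π * Real.sin (dS1 x y / 2) := mul_le_mul_of_nonneg_left h2 hp.le
  linarith

lemma proj_bound {x ψ : E2} (hx : ‖x‖ = 1) (hψ : ψ ≠ 0) :
    dS1 x (‖ψ‖⁻¹ • ψ) ≤ π * ‖x - ψ‖ := by
  set y := ‖ψ‖⁻¹ • ψ with hy_def
  have hy : ‖y‖ = 1 := norm_smul_inv_norm hψ
  have hψ0 : 0 < ‖ψ‖ := norm_pos_iff.2 hψ
  have h1 : ‖ψ - y‖ = |‖ψ‖ - 1| := by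
    have : ψ - y = (1 - ‖ψ‖⁻¹) • ψ := by
      rw [hy_def, sub_smul, one_smul]
    rw [this, norm_smul, Real.norm_eq_abs]
    rw [show (1 - ‖ψ‖⁻¹) = (‖ψ‖ - 1) / ‖ψ‖ by field_simp, abs_div, abs_of_pos hψ0]
    field_simp
  have h2 : |‖ψ‖ - 1| ≤ ‖x - ψ‖ := by
    have := abs_norm_sub_norm_le ψ x
    rw [hx, norm_sub_rev] at this
    exact this
  have h3 : ‖x - y‖ ≤ 2 * ‖x - ψ‖ := by
    calc ‖x - y‖ ≤ ‖x - ψ‖ + ‖ψ - y‖ := norm_sub_le_norm_sub_add_norm_sub x ψ y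
    _ ≤ ‖x - ψ‖ + ‖x - ψ‖ := by rw [h1]; linarith
    _ = 2 * ‖x - ψ‖ := by ring
  have := arc_le_chord hx hy
  have hp := Real.pi_pos
  nlinarith

lemma dS1_triangle {x y z : E2} (hx : ‖x‖ = 1) (hy : ‖y‖ = 1) (hz : ‖z‖ = 1) :
    dS1 x z ≤ dS1 x y + dS1 y z := by
  set a : ℝ := (inner ℝ x y : ℝ) with ha_def
  set b : ℝ := (inner ℝ y z : ℝ) with hb_def
  set c : ℝ := (inner ℝ x z : ℝ) with hc_def
  have ha := abs_le.1 (myInner_le_one hx hy)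
  have hb := abs_le.1 (myInner_le_one hy hz)
  have hc := abs_le.1 (myInner_le_one hx hz)
  by_cases hp : π ≤ Real.arccos a + Real.arccos b
  · exact le_trans (Real.arccos_le_pi c) hp
  · push_neg at hp
    have hyy : (inner ℝ y y : ℝ) = 1 := by
      rw [real_inner_self_eq_norm_sq, hy]; norm_num
    have h1 : (inner ℝ (x - a • y) (z - b • y) : ℝ) = c - a * b := by
      simp only [inner_sub_left, inner_sub_right, real_inner_smul_left,
        real_inner_smul_right, hyy]
      rw [← hb_def, ← hc_def, ← ha_def]
      ring
    have hnorm : ∀ (u v : E2) (r : ℝ), ‖u‖ = 1 → ‖v‖ = 1 → (inner ℝ u v : ℝ) = r →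
        ‖u - r • v‖ = Real.sqrt (1 - r ^ 2) := by
      intro u v r hu hv hr
      have h : ‖u - r • v‖ ^ 2 = 1 - r ^ 2 := by
        rw [norm_sub_sq_real, real_inner_smul_right, norm_smul, Real.norm_eq_abs,
          hu, hv, hr]
        rw [mul_pow, sq_abs]
        ring
      rw [← h, Real.sqrt_sq (norm_nonneg _)]
    have h2 := hnorm x y a hx hy rfl
    have h3 := hnorm z y b hz hy (by rw [real_inner_comm])
    have h4 := abs_real_inner_le_norm (x - a • y) (z - b • y)
    rw [h1, h2, h3] at h4
    have key : a * b - Real.sqrt (1 - a ^ 2) * Real.sqrt (1 - b ^ 2) ≤ c := by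
      have := (abs_le.1 h4).1
      linarith
    have hcos : Real.cos (Real.arccos a + Real.arccos b)
        = a * b - Real.sqrt (1 - a ^ 2) * Real.sqrt (1 - b ^ 2) := by
      rw [Real.cos_add, Real.cos_arccos ha.1 ha.2, Real.cos_arccos hb.1 hb.2,
        Real.sin_arccos, Real.sin_arccos]
    have hstep : Real.arccos c ≤ Real.arccos (Real.cos (Real.arccos a + Real.arccos b)) :=
      myArccos_anti (Real.neg_one_le_cos _) (by rw [hcos]; exact key)
    rwa [Real.arccos_cos
      (by linarith [Real.arccos_nonneg a, Real.arccos_nonneg b]) hp.le] at hstep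

lemma minkowski {m : ℕ} (v w : Fin m → ℝ) :
    Real.sqrt (∑ j, (v j + w j) ^ 2) ≤ Real.sqrt (∑ j, v j ^ 2) + Real.sqrt (∑ j, w j ^ 2) := by
  have key : ∀ u : Fin m → ℝ, ‖(WithLp.equiv 2 (Fin m → ℝ)).symm u‖ = Real.sqrt (∑ j, u j ^ 2) := by
    intro u
    rw [EuclideanSpace.norm_eq]
    congr 1
    exact Finset.sum_congr rfl fun j _ => by
      rw [Real.norm_eq_abs, sq_abs]; rfl
  have h := norm_add_le ((WithLp.equiv 2 (Fin m → ℝ)).symm v) ((WithLp.equiv 2 (Fin m → ℝ)).symm w)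
  have heq : (WithLp.equiv 2 (Fin m → ℝ)).symm v + (WithLp.equiv 2 (Fin m → ℝ)).symm w
      = (WithLp.equiv 2 (Fin m → ℝ)).symm (v + w) := rfl
  rw [heq, key, key, key] at h
  simpa using h


/-- If `((g₁,…,g_k),Θ)` minimizes the circular Procrustes loss, `((g₁',…,g_k'),Ψ)`
minimizes the Euclidean `O(2)`-Procrustes loss, and `Θ'` is the radial projection
of `Ψ` to the circle, then `inf_{h ∈ O(2)} d(h·Θ, Θ') ≤ (1+π)·√(L*)`. -/
theorem procrustes_projection_error_bound
    (k n : ℕ) (hk : 0 < k) (hn : 0 < n)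
    (Φ : Fin k → Fin n → E2) (hΦ : ∀ i j, ‖Φ i j‖ = 1)
    (g : Fin k → (E2 ≃ₗᵢ[ℝ] E2)) (Θ : Fin n → E2) (hΘ : ∀ j, ‖Θ j‖ = 1)
    (hming : ∀ (h : Fin k → (E2 ≃ₗᵢ[ℝ] E2)) (Ξ : Fin n → E2),
      (∀ j, ‖Ξ j‖ = 1) → Lcirc k n Φ g Θ ≤ Lcirc k n Φ h Ξ)
    (g' : Fin k → (E2 ≃ₗᵢ[ℝ] E2)) (Ψ : Fin n → E2) (hΨ : ∀ j, Ψ j ≠ 0)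
    (hming' : ∀ (h : Fin k → (E2 ≃ₗᵢ[ℝ] E2)) (Ξ : Fin n → E2),
      Leuc k n Φ g' Ψ ≤ Leuc k n Φ h Ξ)
    (Θ' : Fin n → E2) (hΘ' : ∀ j, Θ' j = ‖Ψ j‖⁻¹ • Ψ j) :
    (⨅ h : E2 ≃ₗᵢ[ℝ] E2, Real.sqrt (∑ j, dS1 (h (Θ j)) (Θ' j) ^ 2))
      ≤ (1 + π) * Real.sqrt (Lcirc k n Φ g Θ) := by
  classical
  have hk0 : (0:ℝ) < k := Nat.cast_pos.2 hk
  set L := Lcirc k n Φ g Θ with hLdef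
  have hgΦ : ∀ i j, ‖g i (Φ i j)‖ = 1 := fun i j => by
    rw [LinearIsometryEquiv.norm_map]; exact hΦ i j
  have hg'Φ : ∀ i j, ‖g' i (Φ i j)‖ = 1 := fun i j => by
    rw [LinearIsometryEquiv.norm_map]; exact hΦ i j
  set a : Fin k → ℝ := fun i => Real.sqrt (∑ j, dS1 (g i (Φ i j)) (Θ j) ^ 2) with ha_def
  set b : Fin k → ℝ := fun i => Real.sqrt (∑ j, ‖g' i (Φ i j) - Ψ j‖ ^ 2) with hb_def
  have ha_nonneg : ∀ i, 0 ≤ a i := fun i => Real.sqrt_nonneg _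
  have hb_nonneg : ∀ i, 0 ≤ b i := fun i => Real.sqrt_nonneg _
  have ha2 : ∀ i, a i ^ 2 = ∑ j, dS1 (g i (Φ i j)) (Θ j) ^ 2 := fun i =>
    Real.sq_sqrt (Finset.sum_nonneg fun j _ => sq_nonneg _)
  have hb2 : ∀ i, b i ^ 2 = ∑ j, ‖g' i (Φ i j) - Ψ j‖ ^ 2 := fun i =>
    Real.sq_sqrt (Finset.sum_nonneg fun j _ => sq_nonneg _)
  have hLa : ∑ i, a i ^ 2 = k * L := by
    rw [Finset.sum_congr rfl fun i _ => ha2 i, hLdef]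
    unfold Lcirc
    field_simp
  have hL0 : 0 ≤ L := by rw [hLdef]; unfold Lcirc; positivity
  have hbound : ∑ i, b i ^ 2 ≤ k * L := by
    have h1 : Leuc k n Φ g' Ψ ≤ Leuc k n Φ g Θ := hming' g Θ
    have h2 : Leuc k n Φ g Θ ≤ L := by
      rw [hLdef]; unfold Leuc Lcirc
      apply mul_le_mul_of_nonneg_left _ (by positivity)
      apply Finset.sum_le_sum; intro i _
      apply Finset.sum_le_sum; intro j _
      exact pow_le_pow_left₀ (norm_nonneg _) (chord_le_arc (hgΦ i j) (hΘ j)) 2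
    have h3 : ∑ i, b i ^ 2 = k * Leuc k n Φ g' Ψ := by
      rw [Finset.sum_congr rfl fun i _ => hb2 i]
      unfold Leuc
      field_simp
    rw [h3]
    calc (k:ℝ) * Leuc k n Φ g' Ψ ≤ k * Leuc k n Φ g Θ :=
        mul_le_mul_of_nonneg_left h1 hk0.le
    _ ≤ k * L := mul_le_mul_of_nonneg_left h2 hk0.le
  have havg : ∀ (f : Fin k → ℝ), (∀ i, 0 ≤ f i) → ∑ i, f i ^ 2 ≤ k * L →
      ∑ i, f i ≤ k * Real.sqrt L := by
    intro f hf hsum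
    have h := sq_sum_le_card_mul_sum_sq (s := (Finset.univ : Finset (Fin k))) (f := f)
    rw [Finset.card_univ, Fintype.card_fin] at h
    have h2 : (∑ i, f i) ^ 2 ≤ (k:ℝ) ^ 2 * L := by
      calc (∑ i, f i) ^ 2 ≤ k * ∑ i, f i ^ 2 := h
      _ ≤ (k:ℝ) * (k * L) := mul_le_mul_of_nonneg_left hsum hk0.le
      _ = (k:ℝ) ^ 2 * L := by ring
    calc ∑ i, f i = Real.sqrt ((∑ i, f i) ^ 2) :=
        (Real.sqrt_sq (Finset.sum_nonneg fun i _ => hf i)).symm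
    _ ≤ Real.sqrt ((k:ℝ) ^ 2 * L) := Real.sqrt_le_sqrt h2
    _ = k * Real.sqrt L := by rw [Real.sqrt_mul (sq_nonneg _), Real.sqrt_sq hk0.le]
  have : Nonempty (Fin k) := Fin.pos_iff_nonempty.1 hk
  have hne : (Finset.univ : Finset (Fin k)).Nonempty := Finset.univ_nonempty
  have hsum_le : ∑ i, (a i + π * b i) ≤ ∑ _i : Fin k, (1 + π) * Real.sqrt L := by
    rw [Finset.sum_const, Finset.card_univ, Fintype.card_fin, nsmul_eq_mul]
    have hA := havg a ha_nonneg (le_of_eq hLa)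
    have hB := havg b hb_nonneg hbound
    have hπ := Real.pi_pos
    have hsplit : ∑ i, (a i + π * b i) = ∑ i, a i + π * ∑ i, b i := by
      rw [Finset.sum_add_distrib, Finset.mul_sum]
    rw [hsplit]
    nlinarith [Real.sqrt_nonneg L]
  obtain ⟨i, -, hi⟩ := Finset.exists_le_of_sum_le hne hsum_le
  set h₀ : E2 ≃ₗᵢ[ℝ] E2 := (g i).symm.trans (g' i) with hh0
  have hfinal : Real.sqrt (∑ j, dS1 (h₀ (Θ j)) (Θ' j) ^ 2) ≤ a i + π * b i := by
    have hpt : ∀ j, dS1 (h₀ (Θ j)) (Θ' j)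
        ≤ dS1 (g i (Φ i j)) (Θ j) + π * ‖g' i (Φ i j) - Ψ j‖ := by
      intro j
      have hmid : ‖g' i (Φ i j)‖ = 1 := hg'Φ i j
      have hh0n : ‖h₀ (Θ j)‖ = 1 := by
        rw [LinearIsometryEquiv.norm_map]; exact hΘ j
      have hΘ'n : ‖Θ' j‖ = 1 := by rw [hΘ' j]; exact norm_smul_inv_norm (hΨ j)
      have t1 : dS1 (h₀ (Θ j)) (g' i (Φ i j)) = dS1 (g i (Φ i j)) (Θ j) := by
        have e1 : h₀ (Θ j) = g' i ((g i).symm (Θ j)) := rfl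
        have e2 : Φ i j = (g i).symm (g i (Φ i j)) := by simp
        rw [e1, dS1_isom (g' i)]
        conv_lhs => rw [e2]
        rw [dS1_isom ((g i).symm), dS1_symm]
      have t2 : dS1 (g' i (Φ i j)) (Θ' j) ≤ π * ‖g' i (Φ i j) - Ψ j‖ := by
        rw [hΘ' j]; exact proj_bound hmid (hΨ j)
      calc dS1 (h₀ (Θ j)) (Θ' j)
          ≤ dS1 (h₀ (Θ j)) (g' i (Φ i j)) + dS1 (g' i (Φ i j)) (Θ' j) :=
            dS1_triangle hh0n hmid hΘ'n
      _ ≤ _ := by rw [t1]; linarith [t2]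
    calc Real.sqrt (∑ j, dS1 (h₀ (Θ j)) (Θ' j) ^ 2)
        ≤ Real.sqrt (∑ j, ((fun j => dS1 (g i (Φ i j)) (Θ j)) j
            + (fun j => π * ‖g' i (Φ i j) - Ψ j‖) j) ^ 2) := by
          apply Real.sqrt_le_sqrt
          apply Finset.sum_le_sum; intro j _
          exact pow_le_pow_left₀ (dS1_nonneg _ _) (hpt j) 2
    _ ≤ Real.sqrt (∑ j, ((fun j => dS1 (g i (Φ i j)) (Θ j)) j) ^ 2)
        + Real.sqrt (∑ j, ((fun j => π * ‖g' i (Φ i j) - Ψ j‖) j) ^ 2) :=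
          minkowski _ _
    _ = a i + π * b i := by
        congr 1
        have hw : ∑ j, (π * ‖g' i (Φ i j) - Ψ j‖) ^ 2
            = π ^ 2 * ∑ j, ‖g' i (Φ i j) - Ψ j‖ ^ 2 := by
          rw [Finset.mul_sum]
          exact Finset.sum_congr rfl fun j _ => by ring
        simp only [hb_def]
        rw [hw, Real.sqrt_mul (sq_nonneg _), Real.sqrt_sq Real.pi_pos.le]
  have hbdd : BddBelow (Set.range fun h : E2 ≃ₗᵢ[ℝ] E2 =>
      Real.sqrt (∑ j, dS1 (h (Θ j)) (Θ' j) ^ 2)) :=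
    ⟨0, by rintro x ⟨h, rfl⟩; exact Real.sqrt_nonneg _⟩
  exact le_trans (ciInf_le hbdd h₀) (le_trans hfinal hi)

end
end
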